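/- arXiv:2201.12710 — 3 statements merged into one kernel-verified Lean document; each statement's English description precedes it below -/
import Mathlib

section
/- Let $h$ be a pairwise independent hash function from a universe to $[m]$, and let $T$ be a set of $d$ elements with $m/4 \le d < m/2$ (i.e. $m \le 4d < 2m$). Then the probability that exactly one element of $T$ is mapped to $1$ by $h$ is at least $1/8$. -/
open MeasureTheory
open scoped ENNReal

/-- A pairwise independent hash function `h : U → [m]` applied to a set `T` of `d` elements,
modeled via the events `A j = {h(j) = 1}`, each of probability `1/m`, pairwise independent.
If `m ≤ 4d < 2m`, then the probability that exactly one element of `T` is mapped to `1`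
is at least `1/8`. -/
theorem stmt0 {Ω : Type*} [MeasurableSpace Ω] (μ : Measure Ω) [IsProbabilityMeasure μ]
    (d m : ℕ) (hm1 : m ≤ 4 * d) (hm2 : 4 * d < 2 * m)
    (A : Fin d → Set Ω) (hmeas : ∀ j, MeasurableSet (A j))
    (hunif : ∀ j, μ (A j) = (m : ℝ≥0∞)⁻¹)
    (hpair : ∀ i j, i ≠ j → μ (A i ∩ A j) = ((m : ℝ≥0∞)⁻¹) ^ 2) :
    (8 : ℝ≥0∞)⁻¹ ≤ μ {ω | ∃! j : Fin d, ω ∈ A j} := by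
  have hm0 : 0 < m := by omega
  have hd1 : 1 ≤ d := by omega
  set B : Fin d → Set Ω := fun j => A j \ ⋃ i ∈ Finset.univ.erase j, A i with hB
  have hBmeas : ∀ j, MeasurableSet (B j) := fun j =>
    (hmeas j).diff (Finset.measurableSet_biUnion _ (fun i _ => hmeas i))
  have hdisj : Pairwise (Function.onFun Disjoint B) := by
    intro i j hij
    refine Set.disjoint_left.2 fun ω hωi hωj => ?_
    exact hωj.2 (Set.mem_biUnion (Finset.mem_erase.2 ⟨hij, Finset.mem_univ i⟩) hωi.1)
  have hsub : (⋃ j, B j) ⊆ {ω | ∃! j : Fin d, ω ∈ A j} := by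
    intro ω hω
    obtain ⟨j, hj⟩ := Set.mem_iUnion.1 hω
    refine ⟨j, hj.1, fun k hk => ?_⟩
    by_contra hkj
    exact hj.2 (Set.mem_biUnion (Finset.mem_erase.2 ⟨hkj, Finset.mem_univ k⟩) hk)
  -- per-j bound
  have key : ∀ j, (m : ℝ≥0∞)⁻¹ ≤ μ (B j) + (d - 1 : ℕ) * ((m : ℝ≥0∞)⁻¹) ^ 2 := by
    intro j
    have hcover : A j ⊆ B j ∪ ⋃ i ∈ Finset.univ.erase j, (A j ∩ A i) := by
      intro ω hω
      by_cases h : ω ∈ ⋃ i ∈ Finset.univ.erase j, A i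
      · obtain ⟨i, hi, hωi⟩ := Set.mem_iUnion₂.1 h
        exact Or.inr (Set.mem_biUnion hi ⟨hω, hωi⟩)
      · exact Or.inl ⟨hω, h⟩
    calc (m : ℝ≥0∞)⁻¹ = μ (A j) := (hunif j).symm
      _ ≤ μ (B j ∪ ⋃ i ∈ Finset.univ.erase j, (A j ∩ A i)) := measure_mono hcover
      _ ≤ μ (B j) + μ (⋃ i ∈ Finset.univ.erase j, (A j ∩ A i)) := measure_union_le _ _
      _ ≤ μ (B j) + ∑ i ∈ Finset.univ.erase j, μ (A j ∩ A i) := by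
          gcongr; exact measure_biUnion_finset_le _ _
      _ = μ (B j) + (d - 1 : ℕ) * ((m : ℝ≥0∞)⁻¹) ^ 2 := by
          congr 1
          rw [Finset.sum_congr rfl (fun i hi => hpair j i (Finset.ne_of_mem_erase hi).symm)]
          simp [Finset.card_erase_of_mem, mul_comm]
  have hsum : (d : ℝ≥0∞) * (m : ℝ≥0∞)⁻¹ ≤
      (∑ j : Fin d, μ (B j)) + (d : ℝ≥0∞) * ((d - 1 : ℕ) * ((m : ℝ≥0∞)⁻¹) ^ 2) := by
    calc (d : ℝ≥0∞) * (m : ℝ≥0∞)⁻¹ = ∑ _j : Fin d, (m : ℝ≥0∞)⁻¹ := by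
          simp [mul_comm]
      _ ≤ ∑ j : Fin d, (μ (B j) + (d - 1 : ℕ) * ((m : ℝ≥0∞)⁻¹) ^ 2) :=
          Finset.sum_le_sum fun j _ => key j
      _ = (∑ j : Fin d, μ (B j)) + (d : ℝ≥0∞) * ((d - 1 : ℕ) * ((m : ℝ≥0∞)⁻¹) ^ 2) := by
          rw [Finset.sum_add_distrib]; simp [mul_comm]
  -- numeric inequality
  have hfin1 : (d : ℝ≥0∞) * ((d - 1 : ℕ) * ((m : ℝ≥0∞)⁻¹) ^ 2) ≠ ⊤ := by
    have hmne : ((m : ℝ≥0∞)) ≠ 0 := by exact_mod_cast hm0.ne'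
    exact ENNReal.mul_ne_top (ENNReal.natCast_ne_top _)
      (ENNReal.mul_ne_top (ENNReal.natCast_ne_top _)
        (ENNReal.pow_ne_top (ENNReal.inv_ne_top.2 hmne)))
  have hnum : (8 : ℝ≥0∞)⁻¹ + (d : ℝ≥0∞) * ((d - 1 : ℕ) * ((m : ℝ≥0∞)⁻¹) ^ 2) ≤
      (d : ℝ≥0∞) * (m : ℝ≥0∞)⁻¹ := by
    have hmne : ((m : ℝ≥0∞)) ≠ 0 := by exact_mod_cast hm0.ne'
    have hmtop : ((m : ℝ≥0∞)) ≠ ⊤ := ENNReal.natCast_ne_top m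
    have h1 : ((m : ℝ≥0∞)⁻¹) ≠ ⊤ := ENNReal.inv_ne_top.2 hmne
    rw [← ENNReal.toReal_le_toReal (by
        exact ENNReal.add_ne_top.2 ⟨by simp, hfin1⟩)
      (ENNReal.mul_ne_top (ENNReal.natCast_ne_top _) h1)]
    rw [ENNReal.toReal_add (by simp) hfin1]
    simp only [ENNReal.toReal_mul, ENNReal.toReal_pow, ENNReal.toReal_inv,
      ENNReal.toReal_natCast, ENNReal.toReal_ofNat]
    have hmr : (1 : ℝ) ≤ (m : ℝ) := by exact_mod_cast hm0
    have hdm : (m : ℝ) ≤ 4 * d := by exact_mod_cast hm1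
    have hdm2 : 4 * (d : ℝ) + 1 ≤ 2 * m := by exact_mod_cast hm2
    have hdr : (((d - 1 : ℕ)) : ℝ) = (d : ℝ) - 1 := by
      push_cast [Nat.cast_sub hd1]; ring
    rw [hdr]
    have hm' : (0 : ℝ) < m := by linarith
    have hmne' : (m : ℝ) ≠ 0 := hm'.ne'
    have key2 : ((8:ℝ)⁻¹ + (d:ℝ) * (((d:ℝ) - 1) * ((m:ℝ)⁻¹) ^ 2)) * (8 * (m:ℝ)^2)
        ≤ ((d:ℝ) * (m:ℝ)⁻¹) * (8 * (m:ℝ)^2) := by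
      have hinv : (m:ℝ)⁻¹ * (m:ℝ) = 1 := inv_mul_cancel₀ hmne'
      have hinv2 : ((m:ℝ)⁻¹)^2 * (m:ℝ)^2 = 1 := by
        rw [← mul_pow, hinv, one_pow]
      have e1 : ((8:ℝ)⁻¹ + (d:ℝ) * (((d:ℝ) - 1) * ((m:ℝ)⁻¹) ^ 2)) * (8 * (m:ℝ)^2)
          = (m:ℝ)^2 + 8 * ((d:ℝ) * (((d:ℝ) - 1) * (((m:ℝ)⁻¹)^2 * (m:ℝ)^2))) := by
        norm_num; ring
      have e2 : ((d:ℝ) * (m:ℝ)⁻¹) * (8 * (m:ℝ)^2) = 8 * ((d:ℝ) * (m:ℝ)) * ((m:ℝ)⁻¹ * (m:ℝ)) := by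
        ring
      rw [e1, e2, hinv, hinv2, mul_one, mul_one]
      have hfact : ((m:ℝ) - 2*d) * (4*(d:ℝ) - m) ≥ 0 :=
        mul_nonneg (by linarith) (by linarith)
      have hd0 : (0:ℝ) ≤ (d:ℝ) := Nat.cast_nonneg d
      nlinarith [mul_nonneg hd0 hm'.le]
    have hpos : (0:ℝ) < 8 * (m:ℝ)^2 := by positivity
    exact le_of_mul_le_mul_right key2 hpos
    -- nlinarith [sq_nonneg ((m:ℝ) - 2*d), sq_nonneg ((m:ℝ) - 4*d), mul_pos hm' hm']
  -- combine
  have : (8 : ℝ≥0∞)⁻¹ ≤ ∑ j : Fin d, μ (B j) := by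
    have := hnum.trans hsum
    exact (ENNReal.add_le_add_iff_right hfin1).1 this
  calc (8 : ℝ≥0∞)⁻¹ ≤ ∑ j : Fin d, μ (B j) := this
    _ = μ (⋃ j, B j) := by
        rw [measure_iUnion hdisj hBmeas, tsum_fintype]
    _ ≤ μ {ω | ∃! j : Fin d, ω ∈ A j} := measure_mono hsub
end

section
/- Define sequences by $\gamma_1 = 1/24$, $\gamma_j = \gamma_{j-1}/2$; $a_1 = a$, $a_j = a_{j-1}/4$; $b_1 = b$, $b_j = b_{j-1}(1 + 12\gamma_{j-1} + 12 b_{j-1}/a_{j-1})$. Suppose $t \ge 1$ is such that $a_t \ge 100 b_t$ and $b_j \le b_t$ for all $j \le t$ (the $b_j$ are increasing). Then $b_t \le e^2 \cdot b_1$. -/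
open Finset

lemma sum_half_aux (n : ℕ) : ∑ j ∈ Finset.Icc 1 n, ((1/2:ℝ))^j = 1 - (1/2)^n := by
  induction n with
  | zero => simp
  | succ m ih =>
    rw [Finset.sum_Icc_succ_top (by omega), ih, pow_succ]
    ring

lemma sum_quarter_aux (n : ℕ) : ∑ j ∈ Finset.Icc 1 n, ((1/4:ℝ))^(n+1-j) ≤ 1/3 := by
  induction n with
  | zero => norm_num
  | succ m ih =>
    rw [Finset.sum_Icc_succ_top (by omega)]
    have hshift : ∀ j ∈ Finset.Icc 1 m, ((1/4:ℝ))^(m+1+1-j) = ((1/4:ℝ))^(m+1-j) * (1/4) := by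
      intro j hj
      simp only [Finset.mem_Icc] at hj
      rw [show m+1+1-j = (m+1-j)+1 by omega, pow_succ]
    rw [Finset.sum_congr rfl hshift, ← Finset.sum_mul,
      show m+1+1-(m+1) = 1 by omega, pow_one]
    nlinarith [ih]

/-- For the recursively defined sequences `γ_1 = 1/24, γ_{j+1} = γ_j/2`, `a_{j+1} = a_j/4`,
`b_{j+1} = b_j (1 + 12 γ_j + 12 b_j / a_j)`, if `t ≥ 1` satisfies `a_t ≥ 100 b_t` and the
`b_j` are bounded by `b_t` for `j ≤ t`, then `b_t ≤ e² · b_1`. -/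
theorem stmt5 (γ a b : ℕ → ℝ) (t : ℕ) (ht : 1 ≤ t)
    (hγ1 : γ 1 = 1 / 24) (hγ : ∀ j, 1 ≤ j → γ (j + 1) = γ j / 2)
    (hapos : ∀ j, 1 ≤ j → j ≤ t → 0 < a j) (hbpos : ∀ j, 1 ≤ j → j ≤ t → 0 < b j)
    (ha : ∀ j, 1 ≤ j → a (j + 1) = a j / 4)
    (hb : ∀ j, 1 ≤ j → b (j + 1) = b j * (1 + 12 * γ j + 12 * b j / a j))
    (hat : 100 * b t ≤ a t)
    (hbmono : ∀ j, 1 ≤ j → j ≤ t → b j ≤ b t) :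
    b t ≤ Real.exp 2 * b 1 := by
  have ha1pos : 0 < a 1 := hapos 1 le_rfl ht
  have hb1pos : 0 < b 1 := hbpos 1 le_rfl ht
  have hbt0 : 0 < b t := hbpos t ht le_rfl
  have haj : ∀ j, 1 ≤ j → a j = a 1 * (1/4)^(j-1) := by
    intro j hj
    induction j, hj using Nat.le_induction with
    | base => simp
    | succ n hn ih =>
      rw [ha n hn, ih, show n + 1 - 1 = (n-1) + 1 by omega, pow_succ]
      ring
  have hγj : ∀ j, 1 ≤ j → γ j = (1/24) * (1/2)^(j-1) := by
    intro j hj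
    induction j, hj using Nat.le_induction with
    | base => simpa using hγ1
    | succ n hn ih =>
      rw [hγ n hn, ih, show n + 1 - 1 = (n-1) + 1 by omega, pow_succ]
      ring
  have hapos' : ∀ j, 1 ≤ j → 0 < a j := by
    intro j hj; rw [haj j hj]; positivity
  have hγ0 : ∀ j, 1 ≤ j → 0 ≤ γ j := by
    intro j hj; rw [hγj j hj]; positivity
  -- main inductive bound
  have key : ∀ k, 1 ≤ k → k ≤ t →
      b k ≤ b 1 * Real.exp (∑ j ∈ Icc 1 (k-1), (12 * γ j + 12 * b t / a j)) := by
    intro k hk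
    induction k, hk using Nat.le_induction with
    | base => intro _; simp
    | succ n hn ih =>
      intro hnt
      have hn' : n ≤ t := by omega
      have IH := ih hn'
      have han := hapos' n hn
      have hbn := hbpos n hn hn'
      have hxx : 12 * γ n + 12 * b n / a n ≤ 12 * γ n + 12 * b t / a n := by
        have := hbmono n hn hn'
        gcongr
      have h1 : b (n+1) ≤ b n * Real.exp (12 * γ n + 12 * b t / a n) := by
        rw [hb n hn]
        have h2 : 1 + 12 * γ n + 12 * b n / a n ≤ Real.exp (12 * γ n + 12 * b t / a n) := by
          calc 1 + 12 * γ n + 12 * b n / a n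
              ≤ 1 + (12 * γ n + 12 * b t / a n) := by linarith
            _ ≤ Real.exp (12 * γ n + 12 * b t / a n) := by
                have := Real.add_one_le_exp (12 * γ n + 12 * b t / a n); linarith
        nlinarith [hbn, h2]
      have hE : ∑ j ∈ Icc 1 (n+1-1), (12 * γ j + 12 * b t / a j)
          = ∑ j ∈ Icc 1 (n-1), (12 * γ j + 12 * b t / a j) + (12 * γ n + 12 * b t / a n) := by
        rw [Nat.add_sub_cancel, show n = (n-1)+1 by omega, Finset.sum_Icc_succ_top (by omega),
          show n - 1 + 1 = n by omega]
      calc b (n+1) ≤ b n * Real.exp (12 * γ n + 12 * b t / a n) := h1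
        _ ≤ (b 1 * Real.exp (∑ j ∈ Icc 1 (n-1), (12 * γ j + 12 * b t / a j)))
              * Real.exp (12 * γ n + 12 * b t / a n) := by
            exact mul_le_mul_of_nonneg_right IH (Real.exp_nonneg _)
        _ = b 1 * Real.exp (∑ j ∈ Icc 1 (n+1-1), (12 * γ j + 12 * b t / a j)) := by
            rw [hE, Real.exp_add (∑ j ∈ Icc 1 (n-1), (12 * γ j + 12 * b t / a j)) (12 * γ n + 12 * b t / a n), mul_assoc]
  have hmain := key t ht le_rfl
  -- bound the exponent by 2
  have hterm : ∀ j ∈ Icc 1 (t-1),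
      12 * γ j + 12 * b t / a j ≤ (1/2)^j + (12/100) * (1/4)^(t-j) := by
    intro j hj
    simp only [Finset.mem_Icc] at hj
    obtain ⟨hj1, hj2⟩ := hj
    have hjt : j ≤ t := by omega
    have hg : 12 * γ j = (1/2:ℝ)^j := by
      have hp : (1/2:ℝ)^j = (1/2)^(j-1) * (1/2) := by
        rw [← pow_succ, show j-1+1 = j by omega]
      rw [hγj j hj1, hp]; ring
    have hP : (0:ℝ) < (1/4:ℝ)^(j-1) := by positivity
    have hexp : (1/4:ℝ)^(t-1) = (1/4)^(j-1) * (1/4)^(t-j) := by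
      rw [← pow_add]; congr 1; omega
    have hat' : 100 * b t ≤ a 1 * ((1/4:ℝ)^(j-1) * (1/4)^(t-j)) := by
      rw [← hexp, ← haj t ht]; exact hat
    have ha' : 12 * b t / a j ≤ (12/100) * (1/4)^(t-j) := by
      rw [haj j hj1, div_le_iff₀ (by positivity)]
      nlinarith [hat']
    linarith
  have hsum1 : ∑ j ∈ Icc 1 (t-1), ((1/2:ℝ))^j ≤ 1 := by
    rw [sum_half_aux]
    have : (0:ℝ) ≤ (1/2)^(t-1) := by positivity
    linarith
  have hsum2 : ∑ j ∈ Icc 1 (t-1), ((1/4:ℝ))^(t-j) ≤ 1/3 := by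
    have h := sum_quarter_aux (t-1)
    rw [show t-1+1 = t by omega] at h
    exact h
  have hEle : ∑ j ∈ Icc 1 (t-1), (12 * γ j + 12 * b t / a j) ≤ 2 := by
    calc ∑ j ∈ Icc 1 (t-1), (12 * γ j + 12 * b t / a j)
        ≤ ∑ j ∈ Icc 1 (t-1), ((1/2:ℝ)^j + (12/100) * (1/4)^(t-j)) :=
          Finset.sum_le_sum hterm
      _ = ∑ j ∈ Icc 1 (t-1), ((1/2:ℝ))^j + (12/100) * ∑ j ∈ Icc 1 (t-1), ((1/4:ℝ))^(t-j) := by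
          rw [Finset.sum_add_distrib, Finset.mul_sum]
      _ ≤ 1 + (12/100) * (1/3) := by
          have h4 : (0:ℝ) ≤ 12/100 := by norm_num
          nlinarith [hsum1, hsum2]
      _ ≤ 2 := by norm_num
  calc b t ≤ b 1 * Real.exp (∑ j ∈ Icc 1 (t-1), (12 * γ j + 12 * b t / a j)) := hmain
    _ ≤ b 1 * Real.exp 2 := by
        have := Real.exp_le_exp.mpr hEle
        nlinarith [hb1pos]
    _ = Real.exp 2 * b 1 := mul_comm _ _
end

section
/- Let $e = (u,v)$ be a fixed pair, and for $i = 1, \dots, k$ let $h_i : V \to [k]$ be independent hash functions, each uniform on singletons and pairwise independent. Let $F$ be a fixed $(k/\alpha)$-regular graph on $[k]$ with $\alpha > 100$. For neighbor pairs $(i,j)$ (i.e., $F(i,j)=1$), say $e$ appears between $(V_i,V_j)$ if $h_i(u)=1$ and $h_j(v)=1$. Then the probability that $e$ appears between at least one neighbor pair is at least $2/(5\alpha)$. -/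
open MeasureTheory ProbabilityTheory
open scoped ENNReal

lemma bonferroni' {Ω ι : Type*} [DecidableEq ι] [MeasurableSpace Ω] (μ : Measure Ω)
    (A : ι → Set Ω) (hA : ∀ i, MeasurableSet (A i)) (s : Finset ι) :
    ∑ p ∈ s, μ (A p) ≤ μ (⋃ p ∈ s, A p) + ∑ p ∈ s, ∑ q ∈ s.erase p, μ (A p ∩ A q) := by
  classical
  induction s using Finset.induction with
  | empty => simp
  | @insert a s' ha ih =>
    have hU : MeasurableSet (⋃ p ∈ s', A p) := s'.measurableSet_biUnion (fun i _ => hA i)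
    rw [Finset.sum_insert ha]
    have key : μ (A a) + μ (⋃ p ∈ s', A p)
        ≤ μ (⋃ p ∈ insert a s', A p) + ∑ q ∈ s', μ (A a ∩ A q) := by
      have h1 : μ (A a ∪ ⋃ p ∈ s', A p) + μ (A a ∩ ⋃ p ∈ s', A p)
          = μ (A a) + μ (⋃ p ∈ s', A p) := measure_union_add_inter _ hU
      have h2 : μ (A a ∩ ⋃ p ∈ s', A p) ≤ ∑ q ∈ s', μ (A a ∩ A q) := by
        rw [Set.inter_iUnion₂]
        exact measure_biUnion_finset_le _ _
      rw [Finset.set_biUnion_insert, ← h1]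
      exact add_le_add_right h2 _
    calc μ (A a) + ∑ p ∈ s', μ (A p)
        ≤ μ (A a) + (μ (⋃ p ∈ s', A p) + ∑ p ∈ s', ∑ q ∈ s'.erase p, μ (A p ∩ A q)) :=
          add_le_add_right ih _
      _ = (μ (A a) + μ (⋃ p ∈ s', A p)) + ∑ p ∈ s', ∑ q ∈ s'.erase p, μ (A p ∩ A q) := by ring
      _ ≤ (μ (⋃ p ∈ insert a s', A p) + ∑ q ∈ s', μ (A a ∩ A q))
            + ∑ p ∈ s', ∑ q ∈ s'.erase p, μ (A p ∩ A q) := add_le_add_left key _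
      _ ≤ μ (⋃ p ∈ insert a s', A p) + ∑ p ∈ insert a s', ∑ q ∈ (insert a s').erase p, μ (A p ∩ A q) := by
          rw [add_assoc]
          refine add_le_add_right ?_ _
          rw [Finset.sum_insert ha, Finset.erase_insert ha]
          refine add_le_add_right (Finset.sum_le_sum fun p hp => ?_) _
          refine Finset.sum_le_sum_of_subset ?_
          exact Finset.erase_subset_erase _ (Finset.subset_insert _ _)

lemma master' {Ω V : Type*} [MeasurableSpace Ω] (μ : Measure Ω) [IsProbabilityMeasure μ]
    (k : ℕ) [NeZero k] (u v : V) (huv : u ≠ v) (h : Fin k → Ω → V → Fin k)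
    (hindep : iIndepFun h μ)
    (hunif : ∀ i x c, μ {ω | h i ω x = c} = (k : ℝ≥0∞)⁻¹)
    (hpair : ∀ i x y, x ≠ y → ∀ c c',
      μ ({ω | h i ω x = c} ∩ {ω | h i ω y = c'}) = ((k : ℝ≥0∞)⁻¹) ^ 2)
    (S T : Finset (Fin k)) :
    μ ((⋂ i ∈ S, {ω | h i ω u = 1}) ∩ ⋂ j ∈ T, {ω | h j ω v = 1})
      = (k : ℝ≥0∞)⁻¹ ^ (S.card + T.card) := by
  classical
  set G : Fin k → Set Ω :=
    fun a => h a ⁻¹' {f : V → Fin k | (a ∈ S → f u = 1) ∧ (a ∈ T → f v = 1)} with hG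
  have claim1 : ((⋂ i ∈ S, {ω | h i ω u = 1}) ∩ ⋂ j ∈ T, {ω | h j ω v = 1})
      = ⋂ a ∈ S ∪ T, G a := by
    ext ω
    simp only [Set.mem_inter_iff, Set.mem_iInter, Finset.mem_union, hG, Set.mem_preimage,
      Set.mem_setOf_eq]
    constructor
    · rintro ⟨h1, h2⟩ a _
      exact ⟨fun haS => h1 a haS, fun haT => h2 a haT⟩
    · intro H
      exact ⟨fun a haS => (H a (Or.inl haS)).1 haS, fun a haT => (H a (Or.inr haT)).2 haT⟩
  have claim2 : μ (⋂ a ∈ S ∪ T, G a) = ∏ a ∈ S ∪ T, μ (G a) := by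
    refine hindep.meas_biInter fun a _ => ?_
    refine MeasurableSpace.measurableSet_comap.mpr
      ⟨{f : V → Fin k | (a ∈ S → f u = 1) ∧ (a ∈ T → f v = 1)}, ?_, rfl⟩
    have hu : MeasurableSet {f : V → Fin k | f u = 1} :=
      (measurable_pi_apply u) (measurableSet_singleton 1)
    have hv : MeasurableSet {f : V → Fin k | f v = 1} :=
      (measurable_pi_apply v) (measurableSet_singleton 1)
    by_cases haS : a ∈ S <;> by_cases haT : a ∈ T <;>
      simp only [haS, haT, true_implies, false_implies, and_true, true_and]
    · exact hu.inter hv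
    · exact hu
    · exact hv
    · simp
  have claim3 : ∀ a, μ (G a)
      = (k : ℝ≥0∞)⁻¹ ^ ((if a ∈ S then 1 else 0) + (if a ∈ T then 1 else 0)) := by
    intro a
    by_cases haS : a ∈ S <;> by_cases haT : a ∈ T <;>
      simp only [haS, haT, if_true, if_false]
    · have : G a = {ω | h a ω u = 1} ∩ {ω | h a ω v = 1} := by
        ext ω; simp [hG, haS, haT]
      rw [this, hpair a u v huv 1 1]
    · have : G a = {ω | h a ω u = 1} := by ext ω; simp [hG, haS, haT]
      rw [this, hunif, pow_one]
    · have : G a = {ω | h a ω v = 1} := by ext ω; simp [hG, haS, haT]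
      rw [this, hunif, pow_one]
    · have : G a = Set.univ := by ext ω; simp [hG, haS, haT]
      rw [this, measure_univ, pow_zero]
  rw [claim1, claim2, Finset.prod_congr rfl (fun a _ => claim3 a),
    Finset.prod_pow_eq_pow_sum]
  congr 1
  rw [Finset.sum_add_distrib, Finset.sum_ite_mem, Finset.sum_ite_mem,
    Finset.union_inter_cancel_left, Finset.union_inter_cancel_right]
  simp

/-- Fix a pair `(u,v)` of distinct vertices and independent hash functions
`h i : V → [k]` (`i ∈ [k]`), each uniform on singletons and pairwise independent, and a fixed
`(k/α)`-regular graph `F` on `[k]` with `α > 100`. Then the probability that `e = (u,v)`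
appears between at least one neighbor pair `(V_i, V_j)` (i.e. `F.Adj i j`, `h i u = 1` and
`h j v = 1`) is at least `2/(5α)`. -/
theorem stmt16 {Ω V : Type*} [MeasurableSpace Ω] (μ : Measure Ω) [IsProbabilityMeasure μ]
    (k α : ℕ) [NeZero k] (hα : 100 < α) (hdvd : α ∣ k)
    (F : SimpleGraph (Fin k)) [DecidableRel F.Adj] (hreg : F.IsRegularOfDegree (k / α))
    (u v : V) (huv : u ≠ v)
    (h : Fin k → Ω → V → Fin k)
    (hmeas : ∀ i x c, MeasurableSet {ω | h i ω x = c})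
    (hindep : iIndepFun h μ)
    (hunif : ∀ i x c, μ {ω | h i ω x = c} = (k : ℝ≥0∞)⁻¹)
    (hpair : ∀ i x y, x ≠ y → ∀ c c',
      μ ({ω | h i ω x = c} ∩ {ω | h i ω y = c'}) = ((k : ℝ≥0∞)⁻¹) ^ 2) :
    (2 : ℝ) / (5 * α) ≤
      (μ {ω | ∃ i j, F.Adj i j ∧ h i ω u = 1 ∧ h j ω v = 1}).toReal := by
  classical
  set d := k / α with hd
  have hkd : α * d = k := Nat.mul_div_cancel' hdvd
  have hk0 : k ≠ 0 := NeZero.ne k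
  have hd0 : d ≠ 0 := by
    intro h0
    rw [h0, Nat.mul_zero] at hkd
    exact hk0 hkd.symm
  -- the events
  set A : Fin k × Fin k → Set Ω :=
    fun p => {ω | h p.1 ω u = 1} ∩ {ω | h p.2 ω v = 1} with hA
  have hAmeas : ∀ p, MeasurableSet (A p) := fun p => (hmeas _ _ _).inter (hmeas _ _ _)
  set E : Finset (Fin k × Fin k) := Finset.univ.filter (fun p => F.Adj p.1 p.2) with hE
  have hset : {ω | ∃ i j, F.Adj i j ∧ h i ω u = 1 ∧ h j ω v = 1} = ⋃ p ∈ E, A p := by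
    ext ω
    simp only [Set.mem_setOf_eq, Set.mem_iUnion, hE, Finset.mem_filter, Finset.mem_univ,
      true_and, hA, Set.mem_inter_iff, exists_prop]
    constructor
    · rintro ⟨i, j, hij, h1, h2⟩; exact ⟨(i, j), hij, h1, h2⟩
    · rintro ⟨p, hij, h1, h2⟩; exact ⟨p.1, p.2, hij, h1, h2⟩
  -- fiber counts
  have hfib1 : ∀ i : Fin k, (E.filter fun q => q.1 = i).card = d := by
    intro i
    have himg : E.filter (fun q => q.1 = i) = (F.neighborFinset i).image fun j => (i, j) := by
      ext p
      simp only [hE, Finset.mem_filter, Finset.mem_univ, true_and, Finset.mem_image,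
        SimpleGraph.mem_neighborFinset]
      constructor
      · rintro ⟨hadj, h1⟩
        exact ⟨p.2, by rw [← h1]; exact hadj, by rw [← h1]⟩
      · rintro ⟨j, hadj, rfl⟩; exact ⟨hadj, rfl⟩
    rw [himg, Finset.card_image_of_injective _
      (fun a b hab => by simpa using congrArg Prod.snd hab)]
    exact hreg i
  have hfib2 : ∀ j : Fin k, (E.filter fun q => q.2 = j).card = d := by
    intro j
    have himg : E.filter (fun q => q.2 = j) = (F.neighborFinset j).image fun i => (i, j) := by
      ext p
      simp only [hE, Finset.mem_filter, Finset.mem_univ, true_and, Finset.mem_image,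
        SimpleGraph.mem_neighborFinset]
      constructor
      · rintro ⟨hadj, h2⟩
        exact ⟨p.1, by rw [← h2]; exact hadj.symm, by rw [← h2]⟩
      · rintro ⟨i, hadj, rfl⟩; exact ⟨hadj.symm, rfl⟩
    rw [himg, Finset.card_image_of_injective _
      (fun a b hab => by simpa using congrArg Prod.fst hab)]
    exact hreg j
  have hEcard : E.card = k * d := by
    rw [Finset.card_eq_sum_card_fiberwise (f := Prod.fst) (t := Finset.univ)
      (fun x _ => Finset.mem_univ _)]
    have : ∀ i : Fin k, (E.filter fun q => q.1 = i).card = d := hfib1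
    rw [Finset.sum_congr rfl (fun i _ => this i)]
    simp [Finset.card_univ, mul_comm]
  -- measures of single events and pairwise intersections
  have hA1 : ∀ p : Fin k × Fin k, μ (A p) = (k : ℝ≥0∞)⁻¹ ^ 2 := by
    intro p
    have hm := master' μ k u v huv h hindep hunif hpair {p.1} {p.2}
    simpa using hm
  have hA2 : ∀ p q : Fin k × Fin k, μ (A p ∩ A q)
      = (k : ℝ≥0∞)⁻¹ ^ (({p.1, q.1} : Finset (Fin k)).card + ({p.2, q.2} : Finset (Fin k)).card) := by
    intro p q
    have hEq : A p ∩ A q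
        = (⋂ i ∈ ({p.1, q.1} : Finset (Fin k)), {ω | h i ω u = 1})
          ∩ ⋂ j ∈ ({p.2, q.2} : Finset (Fin k)), {ω | h j ω v = 1} := by
      ext ω
      simp only [hA, Set.mem_inter_iff, Set.mem_setOf_eq, Finset.set_biInter_insert,
        Finset.set_biInter_singleton]
      tauto
    rw [hEq, master' μ k u v huv h hindep hunif hpair]
  -- row bound
  have hrow : ∀ p ∈ E, ∑ q ∈ E.erase p, μ (A p ∩ A q)
      ≤ (d : ℝ≥0∞) * ((k : ℝ≥0∞)⁻¹) ^ 3 + (d : ℝ≥0∞) * ((k : ℝ≥0∞)⁻¹) ^ 3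
        + ((k : ℝ≥0∞) * d) * ((k : ℝ≥0∞)⁻¹) ^ 4 := by
    intro p hp
    have hstep1 : ∑ q ∈ E.erase p, μ (A p ∩ A q)
        ≤ ∑ q ∈ E, ((if q.1 = p.1 then ((k : ℝ≥0∞)⁻¹) ^ 3 else 0)
            + ((if q.2 = p.2 then ((k : ℝ≥0∞)⁻¹) ^ 3 else 0) + ((k : ℝ≥0∞)⁻¹) ^ 4)) := by
      refine le_trans (Finset.sum_le_sum ?_) (Finset.sum_le_sum_of_subset (Finset.erase_subset _ _))
      intro q hq
      have hqp : q ≠ p := Finset.ne_of_mem_erase hq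
      rw [hA2 p q]
      by_cases h1 : q.1 = p.1 <;> by_cases h2 : q.2 = p.2
      · exact absurd (Prod.ext h1 h2) hqp
      · have c1 : ({p.1, q.1} : Finset (Fin k)).card = 1 := by simp [h1]
        have c2 : ({p.2, q.2} : Finset (Fin k)).card = 2 :=
          Finset.card_pair (fun hh => h2 hh.symm)
        rw [c1, c2, if_pos h1, if_neg h2]
        norm_num
      · have c1 : ({p.1, q.1} : Finset (Fin k)).card = 2 :=
          Finset.card_pair (fun hh => h1 hh.symm)
        have c2 : ({p.2, q.2} : Finset (Fin k)).card = 1 := by simp [h2]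
        rw [c1, c2, if_neg h1, if_pos h2, zero_add]
        norm_num
      · have c1 : ({p.1, q.1} : Finset (Fin k)).card = 2 :=
          Finset.card_pair (fun hh => h1 hh.symm)
        have c2 : ({p.2, q.2} : Finset (Fin k)).card = 2 :=
          Finset.card_pair (fun hh => h2 hh.symm)
        rw [c1, c2, if_neg h1, if_neg h2, zero_add, zero_add]
    refine hstep1.trans ?_
    rw [Finset.sum_add_distrib, Finset.sum_add_distrib]
    have e1 : ∑ q ∈ E, (if q.1 = p.1 then ((k : ℝ≥0∞)⁻¹) ^ 3 else 0)
        = (d : ℝ≥0∞) * ((k : ℝ≥0∞)⁻¹) ^ 3 := by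
      rw [← Finset.sum_filter, Finset.sum_const, hfib1 p.1, nsmul_eq_mul]
    have e2 : ∑ q ∈ E, (if q.2 = p.2 then ((k : ℝ≥0∞)⁻¹) ^ 3 else 0)
        = (d : ℝ≥0∞) * ((k : ℝ≥0∞)⁻¹) ^ 3 := by
      rw [← Finset.sum_filter, Finset.sum_const, hfib2 p.2, nsmul_eq_mul]
    have e3 : ∑ _q ∈ E, ((k : ℝ≥0∞)⁻¹) ^ 4 = ((k : ℝ≥0∞) * d) * ((k : ℝ≥0∞)⁻¹) ^ 4 := by
      rw [Finset.sum_const, hEcard, nsmul_eq_mul]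
      push_cast
      ring
    rw [e1, e2, e3, add_assoc]
  -- Bonferroni
  have hbon := bonferroni' μ A hAmeas E
  have hsum1 : ∑ p ∈ E, μ (A p) = ((k : ℝ≥0∞) * d) * ((k : ℝ≥0∞)⁻¹) ^ 2 := by
    rw [Finset.sum_congr rfl (fun p _ => hA1 p), Finset.sum_const, hEcard, nsmul_eq_mul]
    push_cast
    ring
  have hsum2 : ∑ p ∈ E, ∑ q ∈ E.erase p, μ (A p ∩ A q)
      ≤ ((k : ℝ≥0∞) * d) * ((d : ℝ≥0∞) * ((k : ℝ≥0∞)⁻¹) ^ 3 + (d : ℝ≥0∞) * ((k : ℝ≥0∞)⁻¹) ^ 3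
        + ((k : ℝ≥0∞) * d) * ((k : ℝ≥0∞)⁻¹) ^ 4) := by
    calc ∑ p ∈ E, ∑ q ∈ E.erase p, μ (A p ∩ A q)
        ≤ ∑ _p ∈ E, ((d : ℝ≥0∞) * ((k : ℝ≥0∞)⁻¹) ^ 3 + (d : ℝ≥0∞) * ((k : ℝ≥0∞)⁻¹) ^ 3
          + ((k : ℝ≥0∞) * d) * ((k : ℝ≥0∞)⁻¹) ^ 4) := Finset.sum_le_sum hrow
      _ = _ := by
          rw [Finset.sum_const, hEcard, nsmul_eq_mul]
          push_cast
          ring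
  have hmain : ((k : ℝ≥0∞) * d) * ((k : ℝ≥0∞)⁻¹) ^ 2
      ≤ μ {ω | ∃ i j, F.Adj i j ∧ h i ω u = 1 ∧ h j ω v = 1}
        + ((k : ℝ≥0∞) * d) * ((d : ℝ≥0∞) * ((k : ℝ≥0∞)⁻¹) ^ 3
          + (d : ℝ≥0∞) * ((k : ℝ≥0∞)⁻¹) ^ 3 + ((k : ℝ≥0∞) * d) * ((k : ℝ≥0∞)⁻¹) ^ 4) := by
    rw [hset]
    calc ((k : ℝ≥0∞) * d) * ((k : ℝ≥0∞)⁻¹) ^ 2 = ∑ p ∈ E, μ (A p) := hsum1.symm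
      _ ≤ μ (⋃ p ∈ E, A p) + ∑ p ∈ E, ∑ q ∈ E.erase p, μ (A p ∩ A q) := hbon
      _ ≤ _ := add_le_add_right hsum2 _
  -- pass to real numbers
  set P := μ {ω | ∃ i j, F.Adj i j ∧ h i ω u = 1 ∧ h j ω v = 1} with hP
  have hPfin : P ≠ ∞ := measure_ne_top μ _
  have hkinv : ((k : ℝ≥0∞))⁻¹ ≠ ∞ := ENNReal.inv_ne_top.mpr (by exact_mod_cast hk0)
  have f1 : (d : ℝ≥0∞) * ((k : ℝ≥0∞)⁻¹) ^ 3 ≠ ∞ :=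
    ENNReal.mul_ne_top (ENNReal.natCast_ne_top d) (ENNReal.pow_ne_top hkinv)
  have f2 : ((k : ℝ≥0∞) * d) * ((k : ℝ≥0∞)⁻¹) ^ 4 ≠ ∞ :=
    ENNReal.mul_ne_top (ENNReal.mul_ne_top (ENNReal.natCast_ne_top k) (ENNReal.natCast_ne_top d))
      (ENNReal.pow_ne_top hkinv)
  have fbig : ((k : ℝ≥0∞) * d) * ((d : ℝ≥0∞) * ((k : ℝ≥0∞)⁻¹) ^ 3
      + (d : ℝ≥0∞) * ((k : ℝ≥0∞)⁻¹) ^ 3 + ((k : ℝ≥0∞) * d) * ((k : ℝ≥0∞)⁻¹) ^ 4) ≠ ∞ :=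
    ENNReal.mul_ne_top (ENNReal.mul_ne_top (ENNReal.natCast_ne_top k) (ENNReal.natCast_ne_top d))
      (ENNReal.add_ne_top.mpr ⟨ENNReal.add_ne_top.mpr ⟨f1, f1⟩, f2⟩)
  have hreal := ENNReal.toReal_mono (ENNReal.add_ne_top.mpr ⟨hPfin, fbig⟩) hmain
  have hbigR : (((k : ℝ≥0∞) * d) * ((d : ℝ≥0∞) * ((k : ℝ≥0∞)⁻¹) ^ 3
      + (d : ℝ≥0∞) * ((k : ℝ≥0∞)⁻¹) ^ 3 + ((k : ℝ≥0∞) * d) * ((k : ℝ≥0∞)⁻¹) ^ 4)).toReal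
      = (k : ℝ) * (d : ℝ) * ((d : ℝ) * ((k : ℝ)⁻¹) ^ 3 + (d : ℝ) * ((k : ℝ)⁻¹) ^ 3
        + (k : ℝ) * (d : ℝ) * ((k : ℝ)⁻¹) ^ 4) := by
    rw [ENNReal.toReal_mul, ENNReal.toReal_add (ENNReal.add_ne_top.mpr ⟨f1, f1⟩) f2,
      ENNReal.toReal_add f1 f1]
    simp [ENNReal.toReal_mul, ENNReal.toReal_pow, ENNReal.toReal_inv]
  have hLR : (((k : ℝ≥0∞) * d) * ((k : ℝ≥0∞)⁻¹) ^ 2).toReal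
      = (k : ℝ) * (d : ℝ) * ((k : ℝ)⁻¹) ^ 2 := by
    simp [ENNReal.toReal_mul, ENNReal.toReal_pow, ENNReal.toReal_inv]
  rw [ENNReal.toReal_add hPfin fbig, hbigR, hLR] at hreal
  -- final real arithmetic
  have haR : (101 : ℝ) ≤ (α : ℝ) := by exact_mod_cast hα
  have hdR : (1 : ℝ) ≤ (d : ℝ) := by exact_mod_cast Nat.one_le_iff_ne_zero.mpr hd0
  have haR0 : (0 : ℝ) < (α : ℝ) := by linarith
  have hdR0 : (0 : ℝ) < (d : ℝ) := by linarith
  have hkeq : (k : ℝ) = (α : ℝ) * (d : ℝ) := by exact_mod_cast hkd.symm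
  have hL : (k : ℝ) * (d : ℝ) * ((k : ℝ)⁻¹) ^ 2 = 1 / (α : ℝ) := by
    rw [hkeq]; field_simp
  have hR : (k : ℝ) * (d : ℝ) * ((d : ℝ) * ((k : ℝ)⁻¹) ^ 3 + (d : ℝ) * ((k : ℝ)⁻¹) ^ 3
      + (k : ℝ) * (d : ℝ) * ((k : ℝ)⁻¹) ^ 4) = 3 / (α : ℝ) ^ 2 := by
    rw [hkeq]; field_simp; ring
  rw [hL, hR] at hreal
  have hx0 : (0 : ℝ) ≤ P.toReal := ENNReal.toReal_nonneg
  have hfinal : 2 / (5 * (α : ℝ)) + 3 / (α : ℝ) ^ 2 ≤ 1 / (α : ℝ) := by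
    rw [div_add_div _ _ (by positivity) (by positivity),
      div_le_div_iff₀ (by positivity) (by positivity)]
    nlinarith
  linarith
end
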